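/- The assignment c(M_n, Y_m) = δ_{n, −m−3μ} (all other basis pairings zero, extended skew-symmetrically and bilinearly) defines a 2-cocycle on L_{−1,μ} for μ ∈ ℤ*, i.e., it satisfies skew-symmetry and the cocycle Jacobi identity. -/

import Mathlib

/-- The free ℂ-module with basis {L_n, Y_n, M_n : n ∈ ℤ};
(n, 0) ↔ L_n, (n, 1) ↔ Y_n, (n, 2) ↔ M_n. -/
abbrev SVModule : Type := (ℤ × Fin 3) →₀ ℂ

/-- basis vector -/
noncomputable def sv (i : ℤ × Fin 3) : SVModule := Finsupp.single i 1

/-- The bracket of L_{λ,μ} on basis vectors. -/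
noncomputable def svBracketAux (lam mu : ℂ) (i j : ℤ × Fin 3) : SVModule :=
  let n : ℤ := i.1
  let m : ℤ := j.1
  if i.2 = 0 ∧ j.2 = 0 then ((m : ℂ) - n) • sv (m + n, 0)
  else if i.2 = 0 ∧ j.2 = 1 then ((m : ℂ) - (lam + 1) * n / 2 + mu) • sv (m + n, 1)
  else if i.2 = 1 ∧ j.2 = 0 then -(((n : ℂ) - (lam + 1) * m / 2 + mu) • sv (m + n, 1))
  else if i.2 = 1 ∧ j.2 = 1 then ((m : ℂ) - n) • sv (m + n, 2)
  else if i.2 = 0 ∧ j.2 = 2 then ((m : ℂ) - lam * n + 2 * mu) • sv (m + n, 2)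
  else if i.2 = 2 ∧ j.2 = 0 then -(((n : ℂ) - lam * m + 2 * mu) • sv (m + n, 2))
  else 0

/-- The bilinear extension of the bracket. -/
noncomputable def svBracket (lam mu : ℂ) :
    SVModule →ₗ[ℂ] SVModule →ₗ[ℂ] SVModule :=
  Finsupp.lsum ℂ fun i => LinearMap.toSpanSingleton ℂ _
    (Finsupp.lsum ℂ fun j => LinearMap.toSpanSingleton ℂ _ (svBracketAux lam mu i j))

/-- Cocycle values: c(M_n, Y_m) = δ_{n, -m-3μ}, extended skew-symmetrically,
all other basis pairings zero. -/
noncomputable def cVal (mu : ℤ) (i j : ℤ × Fin 3) : ℂ :=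
  if i.2 = 2 ∧ j.2 = 1 ∧ i.1 = -j.1 - 3 * mu then 1
  else if i.2 = 1 ∧ j.2 = 2 ∧ j.1 = -i.1 - 3 * mu then -1
  else 0

/-- The bilinear extension of the cocycle values. -/
noncomputable def cMap (mu : ℤ) : SVModule →ₗ[ℂ] SVModule →ₗ[ℂ] ℂ :=
  Finsupp.lsum ℂ fun i => LinearMap.toSpanSingleton ℂ _
    (Finsupp.lsum ℂ fun j => LinearMap.toSpanSingleton ℂ _ (cVal mu i j))

/-!
Only pairings of an `M` with a `Y` are nonzero, so on basis vectors only two kinds of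
triples contribute to the cyclic sum `c([x,y],z) + c([y,z],x) + c([z,x],y)`: three `Y`s,
where the coefficients `(m - n) + (p - m) + (n - p)` cancel, and one each of `L_n, Y_m, M_p`,
where they add up to `-(n + m + p + 3μ)`, which vanishes on the support of `c`.
Both identities are multilinear, so checking them on basis vectors suffices.
-/

section CyclicSum

variable {R M P ι : Type*} [CommRing R] [AddCommGroup M] [Module R M]
  [AddCommGroup P] [Module R P]

def cyclicSum (c : M →ₗ[R] M →ₗ[R] P) (br : M →ₗ[R] M →ₗ[R] M) (x y z : M) : P :=
  c (br x y) z + c (br y z) x + c (br z x) y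

variable (c : M →ₗ[R] M →ₗ[R] P) (br : M →ₗ[R] M →ₗ[R] M)

lemma cyclicSum_rotate (x y z : M) : cyclicSum c br x y z = cyclicSum c br y z x := by
  unfold cyclicSum; abel

lemma cyclicSum_eq_zero_of_basis_left (b : Module.Basis ι R M) {y z : M}
    (h : ∀ i, cyclicSum c br (b i) y z = 0) (x : M) : cyclicSum c br x y z = 0 := by
  have hL : (c.flip z ∘ₗ br.flip y + c (br y z) + c.flip y ∘ₗ br z : M →ₗ[R] P) = 0 := b.ext h
  exact LinearMap.congr_fun hL x

/-- The cyclic sum is linear in its first argument, and rotating it brings each argument there. -/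
lemma cyclicSum_eq_zero_of_basis (b : Module.Basis ι R M)
    (h : ∀ i j k, cyclicSum c br (b i) (b j) (b k) = 0) (x y z : M) :
    cyclicSum c br x y z = 0 := by
  refine cyclicSum_eq_zero_of_basis_left c br b (fun i => ?_) x
  rw [cyclicSum_rotate]
  refine cyclicSum_eq_zero_of_basis_left c br b (fun j => ?_) y
  rw [cyclicSum_rotate]
  exact cyclicSum_eq_zero_of_basis_left c br b (fun k => h k i j) z

end CyclicSum

lemma cMap_sv (mu : ℤ) (i j : ℤ × Fin 3) : cMap mu (sv i) (sv j) = cVal mu i j := by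
  simp [cMap, sv]

lemma svBracket_sv (lam mu : ℂ) (i j : ℤ × Fin 3) :
    svBracket lam mu (sv i) (sv j) = svBracketAux lam mu i j := by
  simp [svBracket, sv]

lemma cVal_swap (mu : ℤ) (i j : ℤ × Fin 3) : cVal mu j i = -cVal mu i j := by
  obtain ⟨n, a⟩ := i; obtain ⟨m, b⟩ := j
  fin_cases a <;> fin_cases b <;> simp [cVal] <;> split_ifs <;> norm_num

lemma cyclicSum_cMap_sv (mu : ℤ) (i j k : ℤ × Fin 3) :
    cyclicSum (cMap mu) (svBracket (-1) mu) (sv i) (sv j) (sv k) = 0 := by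
  obtain ⟨n, a⟩ := i; obtain ⟨m, b⟩ := j; obtain ⟨p, c⟩ := k
  simp only [cyclicSum, svBracket_sv]
  fin_cases a <;> fin_cases b <;> fin_cases c <;>
    simp [svBracketAux, cMap_sv, cVal]
  all_goals
    by_cases hsum : n + m + p + 3 * mu = 0
    · obtain rfl : p = -n - m - 3 * mu := by omega
      split_ifs <;> first | (exfalso; omega) | (push_cast; ring)
    · split_ifs <;> first | (exfalso; omega) | simp

theorem stmt_17_general (mu : ℤ) :
    (∀ x y : SVModule, cMap mu x y = - cMap mu y x) ∧
    (∀ x y z : SVModule,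
      cMap mu (svBracket (-1) (mu : ℂ) x y) z
        + cMap mu (svBracket (-1) (mu : ℂ) y z) x
        + cMap mu (svBracket (-1) (mu : ℂ) z x) y = 0) := by
  refine ⟨fun x y => ?_, cyclicSum_eq_zero_of_basis _ _ Finsupp.basisSingleOne
    fun i j k => cyclicSum_cMap_sv mu i j k⟩
  have hskew : cMap mu = -(cMap mu).flip :=
    LinearMap.ext_basis Finsupp.basisSingleOne Finsupp.basisSingleOne fun i j => by
      show cMap mu (sv i) (sv j) = -cMap mu (sv j) (sv i)
      rw [cMap_sv, cMap_sv, cVal_swap]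
  exact LinearMap.congr_fun₂ hskew x y

theorem stmt_17 (mu : ℤ) (hmu : mu ≠ 0) :
    (∀ x y : SVModule, cMap mu x y = - cMap mu y x) ∧
    (∀ x y z : SVModule,
      cMap mu (svBracket (-1) (mu : ℂ) x y) z
        + cMap mu (svBracket (-1) (mu : ℂ) y z) x
        + cMap mu (svBracket (-1) (mu : ℂ) z x) y = 0) :=
  stmt_17_general mu
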